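/- arXiv:1810.09526 — 2 statements merged into one kernel-verified Lean document; each statement's English description precedes it below -/
import Mathlib

section
/- For every dimension d ≥ 1 there exists a finite constant C = C(d) such that for any ℓ ∈ ℕ there exists a flow ψ̃^ℓ in ℤ^d, supported in Λ_ℓ, connecting the point mass at the origin to the uniform measure p_ℓ on Λ_ℓ, and satisfying Σ_{x∈Λ_ℓ, b∈B} ψ̃^ℓ(x;b)² ≤ C g_d(ℓ) and Σ_{x∈Λ_ℓ, b∈B} |ψ̃^ℓ(x;b)| ≤ C ℓ. -/
open Finset Real

/-- The canonical basis vector `e_i` of `ℤ^d`. -/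
def eZ (d : ℕ) (i : Fin d) : Fin d → ℤ := fun j => if j = i then 1 else 0

/-- The cube `Λ_ℓ = {z ∈ ℤ^d : 0 ≤ z_i ≤ ℓ-1}`. -/
noncomputable def Lam (d ℓ : ℕ) : Finset (Fin d → ℤ) := Fintype.piFinset fun _ => Finset.Icc 0 ((ℓ : ℤ) - 1)

/-- The uniform probability measure `p_ℓ` on `Λ_ℓ`. -/
noncomputable def punif (d ℓ : ℕ) (z : Fin d → ℤ) : ℝ :=
  if z ∈ Lam d ℓ then ((ℓ : ℝ) ^ d)⁻¹ else 0

/-- The convolution `q_ℓ = p_ℓ ∗ p_ℓ` (`p_ℓ` vanishes outside `Λ_ℓ`, so the sum is finite). -/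
noncomputable def qconv (d ℓ : ℕ) (z : Fin d → ℤ) : ℝ :=
  ∑ y ∈ Lam d ℓ, punif d ℓ y * punif d ℓ (z - y)

/-- The point mass at the origin of `ℤ^d`. -/
def delta0 (d : ℕ) (z : Fin d → ℤ) : ℝ := if z = 0 then 1 else 0

/-- The support of the flow `φ` is contained in `Λ`. -/
def SupportedIn (d : ℕ) (φ : (Fin d → ℤ) → Fin d → ℝ) (Λ : Finset (Fin d → ℤ)) : Prop :=
  ∀ z i, φ z i ≠ 0 → z ∈ Λ ∧ z + eZ d i ∈ Λ

/-- The flow `φ` connects `p` to `q`: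
`p(z) - q(z) = Σ_b (φ(z;b) - φ(z-b;b))` for every `z ∈ ℤ^d`. -/
def Connects (d : ℕ) (φ : (Fin d → ℤ) → Fin d → ℝ) (p q : (Fin d → ℤ) → ℝ) : Prop :=
  ∀ z, p z - q z = ∑ i : Fin d, (φ z i - φ (z - eZ d i) i)

/-- `g_d(ℓ) = ℓ` if `d = 1`, `log ℓ` if `d = 2`, `1` if `d ≥ 3`. -/
noncomputable def gd (d ℓ : ℕ) : ℝ := if d = 1 then (ℓ : ℝ) else if d = 2 then Real.log ℓ else 1

/-! The flow is built in dyadic stages. Stage `k` turns the uniform law on the cube of side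
`min (2 ^ k) ℓ` into the one of side `min (2 ^ (k + 1)) ℓ`, stretching one coordinate at a time.
Stretching a coordinate from `L` to `M ≥ L` uses the one-dimensional flow `cdf L - cdf M`, which
takes values in `[0, 1]` and lives on `[0, M - 2]`, tensored with the uniform laws of the other
coordinates. A stage-`k` component thus has mass at most `2 ^ (k + 1)` and sup at most
`2 ^ (-k (d - 1))`. Summing over the `⌈log₂ ℓ⌉` stages gives the `ℓ¹` bound, and
`(Σₖ fₖ)² ≤ 2 Σ_{k' ≤ k} fₖ' fₖ`, with each product bounded by mass times sup, gives energy
`≲ Σₖ 2 ^ (k (2 - d))`, which is of order `ℓ`, `log ℓ` or `1`. -/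

open Function

lemma supportedIn_sum {d : ℕ} {ι : Type*} (s : Finset ι) {φ : ι → (Fin d → ℤ) → Fin d → ℝ}
    {Λ : Finset (Fin d → ℤ)} (h : ∀ k ∈ s, SupportedIn d (φ k) Λ) :
    SupportedIn d (fun z i => ∑ k ∈ s, φ k z i) Λ := by
  intro z i hz
  obtain ⟨k, hk, hφ⟩ := exists_ne_zero_of_sum_ne_zero hz
  exact h k hk z i hφ

lemma connects_sum_range {d n : ℕ} {φ : ℕ → (Fin d → ℤ) → Fin d → ℝ}
    {p : ℕ → (Fin d → ℤ) → ℝ} (h : ∀ k < n, Connects d (φ k) (p k) (p (k + 1))) :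
    Connects d (fun z i => ∑ k ∈ range n, φ k z i) (p 0) (p n) := by
  intro z
  rw [← sum_range_sub' (fun k => p k z)]
  simp_rw [← sum_sub_distrib]
  rw [sum_comm]
  exact sum_congr rfl fun k hk => h k (mem_range.mp hk) z

lemma sum_sq_sum_le {α : Type*} (s : Finset α) (f : ℕ → α → ℝ) (A B : ℕ → ℝ) (n : ℕ)
    (hf : ∀ k x, 0 ≤ f k x) (hA : ∀ k < n, ∑ x ∈ s, f k x ≤ A k)
    (hB : ∀ k < n, ∀ x ∈ s, f k x ≤ B k) (hB0 : ∀ k < n, 0 ≤ B k) :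
    ∑ x ∈ s, (∑ k ∈ range n, f k x) ^ 2 ≤ 2 * ∑ k ∈ range n, B k * ∑ i ∈ range (k + 1), A i := by
  induction n with
  | zero => simp
  | succ n ih =>
    have hprev := ih (fun k hk => hA k (by omega)) (fun k hk => hB k (by omega))
      (fun k hk => hB0 k (by omega))
    -- `(S + f)² ≤ S² + 2 (S + f) f`, and `f ≤ B` bounds the cross term by `B · Σ A`
    have hcross : ∑ x ∈ s, (∑ k ∈ range (n + 1), f k x) * f n x
        ≤ B n * ∑ i ∈ range (n + 1), A i := calc
      _ ≤ ∑ x ∈ s, (∑ k ∈ range (n + 1), f k x) * B n :=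
          sum_le_sum fun x hx => mul_le_mul_of_nonneg_left (hB n (by omega) x hx)
            (sum_nonneg fun k _ => hf k x)
      _ = B n * ∑ i ∈ range (n + 1), ∑ x ∈ s, f i x := by rw [← sum_mul, sum_comm, mul_comm]
      _ ≤ B n * ∑ i ∈ range (n + 1), A i :=
          mul_le_mul_of_nonneg_left
            (sum_le_sum fun i hi => hA i (by simp only [mem_range] at hi; omega)) (hB0 n (by omega))
    calc ∑ x ∈ s, (∑ k ∈ range (n + 1), f k x) ^ 2
        ≤ ∑ x ∈ s, ((∑ k ∈ range n, f k x) ^ 2 + 2 * ((∑ k ∈ range (n + 1), f k x) * f n x)) := by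
          gcongr with x
          rw [sum_range_succ]
          nlinarith [sq_nonneg (f n x)]
      _ ≤ 2 * ∑ k ∈ range n, B k * ∑ i ∈ range (k + 1), A i
          + 2 * (B n * ∑ i ∈ range (n + 1), A i) := by
          rw [sum_add_distrib, ← mul_sum]
          gcongr
      _ = 2 * ∑ k ∈ range (n + 1), B k * ∑ i ∈ range (k + 1), A i := by
          rw [sum_range_succ (fun k => B k * ∑ i ∈ range (k + 1), A i), mul_add]

def tensor {d : ℕ} (h : Fin d → ℤ → ℝ) (z : Fin d → ℤ) : ℝ := ∏ m, h m (z m)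

section Tensor

variable {d : ℕ} (h : Fin d → ℤ → ℝ) (j : Fin d) (f : ℤ → ℝ)

lemma tensor_update (z : Fin d → ℤ) :
    tensor (update h j f) z = f (z j) * ∏ m ∈ univ.erase j, h m (z m) := by
  simp only [tensor, apply_update (fun m (g : ℤ → ℝ) => g (z m)),
    prod_update_of_mem (mem_univ j), sdiff_singleton_eq_erase]

lemma tensor_update_sub_shift (z : Fin d → ℤ) :
    tensor (update h j f) z - tensor (update h j f) (z - eZ d j)
      = (f (z j) - f (z j - 1)) * ∏ m ∈ univ.erase j, h m (z m) := by
  have hshift : ∀ m ∈ univ.erase j, (z - eZ d j) m = z m := fun m hm => by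
    simp [eZ, ne_of_mem_erase hm]
  rw [tensor_update, tensor_update, prod_congr rfl fun m hm => congrArg (h m) (hshift m hm),
    ← sub_mul]
  simp [eZ]

lemma sum_tensor_update (s : Finset ℤ) :
    ∑ z ∈ Fintype.piFinset (fun _ => s), tensor (update h j f) z
      = (∑ t ∈ s, f t) * ∏ m ∈ univ.erase j, ∑ t ∈ s, h m t := by
  simp only [tensor, sum_prod_piFinset, apply_update (fun m (g : ℤ → ℝ) => ∑ t ∈ s, g t),
    prod_update_of_mem (mem_univ j), sdiff_singleton_eq_erase]

end Tensor

noncomputable def unif (n : ℕ) (t : ℤ) : ℝ := if t ∈ Icc 0 ((n : ℤ) - 1) then (n : ℝ)⁻¹ else 0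

noncomputable def cdf (n : ℕ) (t : ℤ) : ℝ := ∑ s ∈ Icc 0 t, unif n s

section OneDim

variable {n L M : ℕ} {t : ℤ}

lemma unif_nonneg : 0 ≤ unif n t := by
  unfold unif; split <;> positivity

lemma unif_le_inv : unif n t ≤ (n : ℝ)⁻¹ := by
  unfold unif; split
  · exact le_rfl
  · positivity

lemma mem_Icc_of_unif_ne_zero (h : unif n t ≠ 0) : t ∈ Icc 0 ((n : ℤ) - 1) := by
  by_contra hc
  exact h (if_neg hc)

lemma cdf_eq : cdf n t = (min (t + 1) n).toNat / n := by
  simp only [cdf, unif]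
  rw [sum_ite_mem, sum_const, nsmul_eq_mul, div_eq_mul_inv]
  have hI : Icc 0 t ∩ Icc 0 ((n : ℤ) - 1) = Icc 0 (min t ((n : ℤ) - 1)) := by
    ext x
    simp only [mem_inter, mem_Icc]
    omega
  rw [hI, Int.card_Icc]
  congr 3
  omega

lemma cdf_of_neg (ht : t < 0) : cdf n t = 0 := by
  rw [cdf, Icc_eq_empty (by omega), sum_empty]

lemma cdf_sub_cdf_sub_one : cdf n t - cdf n (t - 1) = unif n t := by
  rcases lt_or_ge t 0 with ht | ht
  · rw [cdf_of_neg ht, cdf_of_neg (by omega), unif, if_neg (by simp; omega), sub_zero]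
  · rw [cdf, cdf, ← insert_Icc_sub_one_right_eq_Icc ht, sum_insert (by simp),
      add_sub_cancel_right]

lemma cdf_nonneg : 0 ≤ cdf n t := sum_nonneg fun _ _ => unif_nonneg

lemma cdf_le_one : cdf n t ≤ 1 := by
  rw [cdf_eq]
  apply div_le_one_of_le₀ _ (Nat.cast_nonneg n)
  exact_mod_cast (by omega : (min (t + 1) n).toNat ≤ n)

lemma cdf_of_le (hn : 1 ≤ n) (ht : (n : ℤ) - 1 ≤ t) : cdf n t = 1 := by
  rw [cdf_eq, show min (t + 1) n = n by omega, Int.toNat_natCast]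
  exact div_self (by positivity)

lemma cdf_anti (hL : 1 ≤ L) (hLM : L ≤ M) : cdf M t ≤ cdf L t := by
  rcases le_or_gt (L : ℤ) (t + 1) with ht | ht
  · rw [cdf_of_le hL (by omega)]
    exact cdf_le_one
  · rw [cdf_eq, cdf_eq, show min (t + 1) L = t + 1 by omega, show min (t + 1) M = t + 1 by omega]
    gcongr

lemma cdf_sub_cdf_le_one : cdf L t - cdf M t ≤ 1 := by
  linarith [cdf_le_one (n := L) (t := t), cdf_nonneg (n := M) (t := t)]

lemma mem_Icc_of_cdf_sub_cdf_ne_zero (hL : 1 ≤ L) (hLM : L ≤ M) (h : cdf L t - cdf M t ≠ 0) :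
    t ∈ Icc 0 ((M : ℤ) - 2) := by
  by_contra ht
  rw [mem_Icc, not_and_or] at ht
  rcases ht with ht | ht
  · rw [cdf_of_neg (by omega), cdf_of_neg (by omega), sub_self] at h
    exact h rfl
  · rw [cdf_of_le hL (by omega), cdf_of_le (hL.trans hLM) (by omega), sub_self] at h
    exact h rfl

lemma sum_cdf_sub_cdf_le (hL : 1 ≤ L) (hLM : L ≤ M) (s : Finset ℤ) :
    ∑ t ∈ s, (cdf L t - cdf M t) ≤ M := calc
  _ = ∑ t ∈ s.filter (· ∈ Icc 0 ((M : ℤ) - 2)), (cdf L t - cdf M t) :=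
      (sum_filter_of_ne fun t _ ht => mem_Icc_of_cdf_sub_cdf_ne_zero hL hLM ht).symm
  _ ≤ #(s.filter (· ∈ Icc 0 ((M : ℤ) - 2))) • (1 : ℝ) :=
      sum_le_card_nsmul _ _ _ fun _ _ => cdf_sub_cdf_le_one
  _ ≤ #(Icc 0 ((M : ℤ) - 2)) := by
      rw [nsmul_one]
      exact_mod_cast card_le_card fun t ht => (mem_filter.mp ht).2
  _ ≤ M := by
      rw [Int.card_Icc]
      exact_mod_cast (by omega : ((M : ℤ) - 2 + 1 - 0).toNat ≤ M)

end OneDim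

noncomputable def prodUnif {d : ℕ} (n : Fin d → ℕ) : (Fin d → ℤ) → ℝ := tensor fun m => unif (n m)

lemma prodUnif_one (d : ℕ) : prodUnif (fun _ : Fin d => 1) = delta0 d := by
  funext z
  have hunif : ∀ t : ℤ, unif 1 t = if t = 0 then 1 else 0 := fun t => by
    by_cases ht : t = 0 <;> simp [unif, ht]
  simp only [prodUnif, tensor, delta0, hunif, prod_ite_zero, mem_univ, true_implies, prod_const_one,
    funext_iff, Pi.zero_apply]

lemma prodUnif_const (d ℓ : ℕ) : prodUnif (fun _ : Fin d => ℓ) = punif d ℓ := by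
  funext z
  by_cases hz : z ∈ Lam d ℓ
  · have hunif : ∀ m, unif ℓ (z m) = (ℓ : ℝ)⁻¹ := fun m => if_pos (Fintype.mem_piFinset.mp hz m)
    rw [punif, if_pos hz, prodUnif, tensor, prod_congr rfl fun m _ => hunif m, prod_const,
      card_univ, Fintype.card_fin, inv_pow]
  · rw [punif, if_neg hz]
    obtain ⟨m, hm⟩ : ∃ m, z m ∉ Icc 0 ((ℓ : ℤ) - 1) := by
      simpa [Lam, Fintype.mem_piFinset] using hz
    exact prod_eq_zero (mem_univ m) (if_neg hm)

def scale (ℓ k : ℕ) : ℕ := min (2 ^ k) ℓ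

section Scale

variable {ℓ : ℕ} (k : ℕ)

lemma one_le_scale (hℓ : 1 ≤ ℓ) : 1 ≤ scale ℓ k := le_min Nat.one_le_two_pow hℓ

lemma scale_le : scale ℓ k ≤ ℓ := min_le_right _ _

lemma scale_le_two_pow : scale ℓ k ≤ 2 ^ k := min_le_left _ _

lemma scale_le_scale_succ : scale ℓ k ≤ scale ℓ (k + 1) :=
  min_le_min_right ℓ (Nat.pow_le_pow_right two_pos k.le_succ)

lemma scale_zero (hℓ : 1 ≤ ℓ) : scale ℓ 0 = 1 := min_eq_left hℓ

lemma scale_clog : scale ℓ (Nat.clog 2 ℓ) = ℓ := min_eq_right (Nat.le_pow_clog one_lt_two ℓ)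

lemma scale_of_lt_clog {k : ℕ} (hk : k < Nat.clog 2 ℓ) : scale ℓ k = 2 ^ k :=
  min_eq_left (Nat.pow_lt_of_lt_clog hk).le

end Scale

lemma mem_Lam {d ℓ : ℕ} {z : Fin d → ℤ} : z ∈ Lam d ℓ ↔ ∀ m, 0 ≤ z m ∧ z m ≤ (ℓ : ℤ) - 1 := by
  simp [Lam, Fintype.mem_piFinset]

def stageSides {d : ℕ} (ℓ k i : ℕ) : Fin d → ℕ :=
  fun m => if (m : ℕ) < i then scale ℓ (k + 1) else scale ℓ k

section Stage

variable {d ℓ : ℕ} (k : ℕ)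

lemma stageSides_zero : stageSides ℓ k 0 = fun _ : Fin d => scale ℓ k := by
  funext m
  simp [stageSides]

lemma stageSides_self : stageSides ℓ k d = fun _ : Fin d => scale ℓ (k + 1) := by
  funext m
  simp [stageSides]

lemma stageSides_apply_self (j : Fin d) : stageSides ℓ k j j = scale ℓ k := by
  simp [stageSides]

lemma update_stageSides (j : Fin d) :
    update (stageSides ℓ k j) j (scale ℓ (k + 1)) = stageSides ℓ k (j + 1) := by
  funext m
  rcases eq_or_ne m j with rfl | hmj
  · simp [stageSides]
  · have : (m : ℕ) ≠ j := Fin.val_ne_of_ne hmj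
    simp only [update_of_ne hmj, stageSides]
    congr 1
    exact propext (by omega)

lemma scale_le_stageSides (i : ℕ) (m : Fin d) : scale ℓ k ≤ stageSides ℓ k i m := by
  unfold stageSides; split
  · exact scale_le_scale_succ k
  · exact le_rfl

lemma stageSides_le (i : ℕ) (m : Fin d) : stageSides ℓ k i m ≤ ℓ := by
  unfold stageSides; split <;> exact scale_le _

noncomputable def stageFlow (ℓ k : ℕ) (j : Fin d) : (Fin d → ℤ) → ℝ :=
  tensor (update (fun m => unif (stageSides ℓ k j m)) j
    fun t => cdf (scale ℓ k) t - cdf (scale ℓ (k + 1)) t)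

lemma stageFlow_sub_shift (j : Fin d) (z : Fin d → ℤ) :
    stageFlow ℓ k j z - stageFlow ℓ k j (z - eZ d j)
      = prodUnif (stageSides ℓ k j) z - prodUnif (stageSides ℓ k (j + 1)) z := by
  set base : Fin d → ℤ → ℝ := fun m => unif (stageSides ℓ k j m)
  have hbefore : (fun m => unif (stageSides ℓ k j m)) = update base j (unif (scale ℓ k)) := by
    rw [← stageSides_apply_self k j]
    exact (update_eq_self j base).symm
  have hafter :
      (fun m => unif (stageSides ℓ k (j + 1) m)) = update base j (unif (scale ℓ (k + 1))) := by
    rw [← update_stageSides]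
    exact comp_update unif _ j _
  rw [stageFlow, tensor_update_sub_shift, prodUnif, prodUnif, hbefore, hafter, tensor_update,
    tensor_update, ← sub_mul, ← cdf_sub_cdf_sub_one, ← cdf_sub_cdf_sub_one]
  ring

lemma stageFlow_connects :
    Connects d (fun z j => stageFlow ℓ k j z) (prodUnif fun _ => scale ℓ k)
      (prodUnif fun _ => scale ℓ (k + 1)) := by
  intro z
  rw [← stageSides_zero, ← stageSides_self,
    ← sum_range_sub' (fun i => prodUnif (stageSides ℓ k i) z),
    ← Fin.sum_univ_eq_sum_range (fun i => prodUnif (stageSides ℓ k i) z - _)]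
  exact sum_congr rfl fun j _ => (stageFlow_sub_shift k j z).symm

variable {k} (hℓ : 1 ≤ ℓ)
include hℓ

lemma stageFlow_supportedIn : SupportedIn d (fun z j => stageFlow ℓ k j z) (Lam d ℓ) := by
  intro z j hz
  dsimp only at hz
  rw [stageFlow, tensor_update] at hz
  have hj := mem_Icc.mp <| mem_Icc_of_cdf_sub_cdf_ne_zero (one_le_scale k hℓ)
    (scale_le_scale_succ k) (left_ne_zero_of_mul hz)
  have hm : ∀ m ≠ j, 0 ≤ z m ∧ z m ≤ (ℓ : ℤ) - 1 := fun m hmj => by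
    have := mem_Icc.mp <| mem_Icc_of_unif_ne_zero <|
      prod_ne_zero_iff.mp (right_ne_zero_of_mul hz) m (mem_erase.mpr ⟨hmj, mem_univ m⟩)
    have := stageSides_le (ℓ := ℓ) k j m
    omega
  have hM := scale_le (ℓ := ℓ) (k + 1)
  refine ⟨mem_Lam.mpr fun m => ?_, mem_Lam.mpr fun m => ?_⟩ <;>
    rcases eq_or_ne m j with rfl | hmj
  · omega
  · exact hm m hmj
  · simp only [Pi.add_apply, eZ, if_pos]
    omega
  · simpa [eZ, hmj] using hm m hmj

lemma stageFlow_nonneg (j : Fin d) (z : Fin d → ℤ) : 0 ≤ stageFlow ℓ k j z := by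
  rw [stageFlow, tensor_update]
  exact mul_nonneg (sub_nonneg.mpr (cdf_anti (one_le_scale k hℓ) (scale_le_scale_succ k)))
    (prod_nonneg fun _ _ => unif_nonneg)

lemma sum_stageFlow_le (j : Fin d) : ∑ z ∈ Lam d ℓ, stageFlow ℓ k j z ≤ 2 ^ (k + 1) := by
  have hunif : ∀ m : Fin d, ∑ t ∈ Icc 0 ((ℓ : ℤ) - 1), unif (stageSides ℓ k j m) t = 1 :=
    fun m => cdf_of_le ((one_le_scale k hℓ).trans (scale_le_stageSides k j m))
      (by have := stageSides_le (ℓ := ℓ) k j m; omega)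
  rw [Lam, stageFlow, sum_tensor_update, prod_congr rfl fun m _ => hunif m, prod_const_one,
    mul_one]
  calc _ ≤ (scale ℓ (k + 1) : ℝ) :=
        sum_cdf_sub_cdf_le (one_le_scale k hℓ) (scale_le_scale_succ k) _
    _ ≤ 2 ^ (k + 1) := by exact_mod_cast scale_le_two_pow (k + 1)

lemma stageFlow_le (j : Fin d) (z : Fin d → ℤ) :
    stageFlow ℓ k j z ≤ ((scale ℓ k : ℝ)⁻¹) ^ (d - 1) := by
  have hfactor : ∀ m, unif (stageSides ℓ k j m) (z m) ≤ (scale ℓ k : ℝ)⁻¹ := fun m =>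
    unif_le_inv.trans <| inv_anti₀ (by exact_mod_cast one_le_scale k hℓ)
      (by exact_mod_cast scale_le_stageSides k j m)
  rw [stageFlow, tensor_update]
  calc _ ≤ 1 * ∏ m ∈ univ.erase j, (scale ℓ k : ℝ)⁻¹ :=
        mul_le_mul cdf_sub_cdf_le_one (prod_le_prod (fun _ _ => unif_nonneg) fun m _ => hfactor m)
          (prod_nonneg fun _ _ => unif_nonneg) zero_le_one
    _ = _ := by
        rw [one_mul, prod_const, card_erase_of_mem (mem_univ j), card_univ, Fintype.card_fin]

end Stage

lemma sum_range_two_pow_le (n : ℕ) : ∑ i ∈ range n, (2 : ℝ) ^ i ≤ 2 ^ n := by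
  rw [geom_sum_eq (by norm_num)]
  norm_num

section Clog

variable {ℓ : ℕ} (hℓ : 1 ≤ ℓ)
include hℓ

lemma two_pow_clog_lt : 2 ^ Nat.clog 2 ℓ < 2 * ℓ := by
  rcases hℓ.eq_or_lt with rfl | hℓ
  · simp
  · have h := Nat.pow_pred_clog_lt_self one_lt_two hℓ
    rw [← Nat.succ_pred_eq_of_pos (Nat.clog_pos one_lt_two hℓ), pow_succ]
    omega

lemma sum_range_clog_two_pow_le : ∑ k ∈ range (Nat.clog 2 ℓ), (2 : ℝ) ^ k ≤ 2 * ℓ :=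
  (sum_range_two_pow_le _).trans (by exact_mod_cast (two_pow_clog_lt hℓ).le)

lemma clog_two_le_log : (Nat.clog 2 ℓ : ℝ) ≤ 4 * Real.log ℓ := by
  have hsq : (2 : ℝ) ^ Nat.clog 2 ℓ ≤ (ℓ : ℝ) ^ 2 := by
    have := two_pow_clog_lt hℓ
    exact_mod_cast (show 2 ^ Nat.clog 2 ℓ ≤ ℓ ^ 2 by nlinarith)
  have hlog := Real.log_le_log (by positivity) hsq
  rw [Real.log_pow, Real.log_pow, Nat.cast_ofNat] at hlog
  nlinarith [Real.log_two_gt_d9, (Nat.cast_nonneg _ : (0 : ℝ) ≤ Nat.clog 2 ℓ),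
    Real.log_nonneg (show (1 : ℝ) ≤ ℓ by exact_mod_cast hℓ)]

lemma sum_range_clog_le_gd {d : ℕ} (hd : 1 ≤ d) :
    ∑ k ∈ range (Nat.clog 2 ℓ), (2 : ℝ) ^ k * ((2 ^ k)⁻¹) ^ (d - 1) ≤ 4 * gd d ℓ := by
  obtain ⟨e, rfl⟩ : ∃ e, d = e + 1 := ⟨d - 1, by omega⟩
  rw [Nat.add_sub_cancel]
  rcases e with _ | _ | e
  · simp only [pow_zero, mul_one, gd, if_true]
    linarith [sum_range_clog_two_pow_le hℓ, (Nat.cast_nonneg ℓ : (0 : ℝ) ≤ ℓ)]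
  · have hterm : ∀ k, (2 : ℝ) ^ k * ((2 ^ k)⁻¹) ^ (0 + 1) = 1 := fun k => by
      rw [zero_add, pow_one, mul_inv_cancel₀ (by positivity)]
    rw [sum_congr rfl fun k _ => hterm k, sum_const, card_range, nsmul_one, gd,
      if_neg (by norm_num), if_pos rfl]
    exact clog_two_le_log hℓ
  · rw [gd, if_neg (by omega), if_neg (by omega)]
    calc _ ≤ ∑ k ∈ range (Nat.clog 2 ℓ), (1 / (2 : ℝ)) ^ k := sum_le_sum fun k _ => by
          have hx : (2 : ℝ) ^ k * (2 ^ k)⁻¹ = 1 := mul_inv_cancel₀ (by positivity)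
          calc (2 : ℝ) ^ k * ((2 ^ k)⁻¹) ^ (e + 1 + 1) = ((2 ^ k)⁻¹) ^ (e + 1) := by
                rw [pow_succ', ← mul_assoc, hx, one_mul]
            _ ≤ (2 ^ k)⁻¹ := pow_le_of_le_one (by positivity)
                (inv_le_one_of_one_le₀ (one_le_pow₀ one_le_two)) (by omega)
            _ = (1 / 2) ^ k := by rw [one_div, inv_pow]
      _ ≤ 2 := sum_geometric_two_le _
      _ ≤ 4 * 1 := by norm_num

end Clog

noncomputable def dyadicFlow (d ℓ : ℕ) (z : Fin d → ℤ) (j : Fin d) : ℝ :=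
  ∑ k ∈ range (Nat.clog 2 ℓ), stageFlow ℓ k j z

section Dyadic

variable {d ℓ : ℕ} (hℓ : 1 ≤ ℓ)
include hℓ

lemma dyadicFlow_supportedIn : SupportedIn d (dyadicFlow d ℓ) (Lam d ℓ) :=
  supportedIn_sum _ fun _ _ => stageFlow_supportedIn hℓ

lemma dyadicFlow_connects : Connects d (dyadicFlow d ℓ) (delta0 d) (punif d ℓ) := by
  have h := connects_sum_range (d := d) (n := Nat.clog 2 ℓ) (φ := fun k z j => stageFlow ℓ k j z)
    (p := fun k => prodUnif fun _ => scale ℓ k) fun k _ => stageFlow_connects k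
  rwa [scale_zero hℓ, scale_clog, prodUnif_one, prodUnif_const] at h

lemma sum_abs_dyadicFlow_le : ∑ x ∈ Lam d ℓ, ∑ i, |dyadicFlow d ℓ x i| ≤ d * (4 * ℓ) := calc
  _ = ∑ i : Fin d, ∑ k ∈ range (Nat.clog 2 ℓ), ∑ x ∈ Lam d ℓ, stageFlow ℓ k i x := by
      rw [sum_comm]
      refine sum_congr rfl fun i _ => ?_
      rw [sum_comm]
      exact sum_congr rfl fun x _ =>
        abs_of_nonneg (sum_nonneg fun _ _ => stageFlow_nonneg hℓ i x)
  _ ≤ ∑ _i : Fin d, ∑ k ∈ range (Nat.clog 2 ℓ), (2 : ℝ) ^ (k + 1) := by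
      gcongr with i _ k
      exact sum_stageFlow_le hℓ i
  _ ≤ ∑ _i : Fin d, 2 * (2 * (ℓ : ℝ)) := by
      gcongr with i
      simp only [pow_succ, ← sum_mul]
      linarith [sum_range_clog_two_pow_le hℓ]
  _ = d * (4 * ℓ) := by
      rw [sum_const, card_univ, Fintype.card_fin, nsmul_eq_mul]
      ring

lemma sum_sq_dyadicFlow_le : ∑ x ∈ Lam d ℓ, ∑ i, dyadicFlow d ℓ x i ^ 2
    ≤ d * (8 * ∑ k ∈ range (Nat.clog 2 ℓ), (2 : ℝ) ^ k * ((2 ^ k)⁻¹) ^ (d - 1)) := calc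
  _ = ∑ i : Fin d, ∑ x ∈ Lam d ℓ, (∑ k ∈ range (Nat.clog 2 ℓ), stageFlow ℓ k i x) ^ 2 := sum_comm
  _ ≤ ∑ _i : Fin d, 2 * ∑ k ∈ range (Nat.clog 2 ℓ),
        ((2 : ℝ) ^ k)⁻¹ ^ (d - 1) * ∑ k' ∈ range (k + 1), (2 : ℝ) ^ (k' + 1) :=
      sum_le_sum fun i _ => sum_sq_sum_le _ (fun k x => stageFlow ℓ k i x) _ _ _
        (fun _ x => stageFlow_nonneg hℓ i x) (fun _ _ => sum_stageFlow_le hℓ i)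
        (fun k hk x _ => by
          have h := stageFlow_le (k := k) hℓ i x
          rwa [scale_of_lt_clog hk, Nat.cast_pow, Nat.cast_ofNat] at h)
        (fun _ _ => by positivity)
  _ ≤ ∑ _i : Fin d, 2 * ∑ k ∈ range (Nat.clog 2 ℓ), ((2 : ℝ) ^ k)⁻¹ ^ (d - 1) * 2 ^ (k + 2) := by
      gcongr with i k
      calc ∑ k' ∈ range (k + 1), (2 : ℝ) ^ (k' + 1) = (∑ k' ∈ range (k + 1), (2 : ℝ) ^ k') * 2 := by
            simp only [sum_mul, pow_succ]
        _ ≤ 2 ^ (k + 1) * 2 := by gcongr; exact sum_range_two_pow_le (k + 1)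
        _ = 2 ^ (k + 2) := by ring
  _ = _ := by
      rw [sum_const, card_univ, Fintype.card_fin, nsmul_eq_mul]
      congr 1
      rw [mul_sum, mul_sum]
      exact sum_congr rfl fun k _ => by ring

end Dyadic

/-- Lemma I.2: there is `C = C(d)` such that for every `ℓ ∈ ℕ` there is a flow `ψ̃^ℓ`,
supported in `Λ_ℓ`, connecting the point mass at the origin to the uniform measure `p_ℓ`,
with `Σ_{x∈Λ_ℓ,b} ψ̃^ℓ(x;b)² ≤ C g_d(ℓ)` and `Σ_{x∈Λ_ℓ,b} |ψ̃^ℓ(x;b)| ≤ C ℓ`. -/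
theorem flow_to_uniform_lemma (d : ℕ) (hd : 1 ≤ d) :
    ∃ C : ℝ, 0 < C ∧ ∀ ℓ : ℕ, 1 ≤ ℓ →
      ∃ ψ : (Fin d → ℤ) → Fin d → ℝ,
        SupportedIn d ψ (Lam d ℓ) ∧
        Connects d ψ (delta0 d) (punif d ℓ) ∧
        (∑ x ∈ Lam d ℓ, ∑ i : Fin d, (ψ x i) ^ 2) ≤ C * gd d ℓ ∧
        (∑ x ∈ Lam d ℓ, ∑ i : Fin d, |ψ x i|) ≤ C * ℓ := by
  have hdpos : (0 : ℝ) < d := by exact_mod_cast hd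
  refine ⟨32 * d, by positivity, fun ℓ hℓ => ⟨dyadicFlow d ℓ, dyadicFlow_supportedIn hℓ,
    dyadicFlow_connects hℓ, ?_, ?_⟩⟩
  · calc _ ≤ _ := sum_sq_dyadicFlow_le hℓ
      _ ≤ d * (8 * (4 * gd d ℓ)) := by gcongr; exact sum_range_clog_le_gd hℓ hd
      _ = 32 * d * gd d ℓ := by ring
  · calc _ ≤ (d : ℝ) * (4 * ℓ) := sum_abs_dyadicFlow_le hℓ
      _ ≤ 32 * d * ℓ := by nlinarith [(Nat.cast_nonneg ℓ : (0 : ℝ) ≤ ℓ)]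
end

section
/- Let ε₀ > 0 and assume ε₀ ≤ u_x ≤ 1−ε₀ for all x ∈ 𝕋_n^d. Let x, y ∈ 𝕋_n^d, let f be a density with respect to μ, and let h : Ω_n → ℝ satisfy ∇_{x,y} h ≡ 0. Then for any β > 0, ∫ h s_{x,y} ∇_{x,y} f dμ ≤ β D_{x,y}(√f; μ) + (4/(ε₀² β)) ∫ h² f dμ, where s_{x,y}(η) := η_x(1−η_y)/(u_x(1−u_y)). -/
open Finset Real

/-- The discrete torus `𝕋_n^d = (ℤ/nℤ)^d`. -/
abbrev Torus (n d : ℕ) := Fin d → ZMod n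

/-- The configuration space `Ω_n = {0,1}^(𝕋_n^d)`. -/
abbrev Config (n d : ℕ) := Torus n d → Bool

/-- Occupation variable `η_x ∈ {0,1} ⊆ ℝ`. -/
noncomputable def occ {n d : ℕ} (η : Config n d) (x : Torus n d) : ℝ := if η x then 1 else 0

/-- The weight of the product Bernoulli measure `μ = ⊗_x Bern(u_x)`. -/
noncomputable def bern {n d : ℕ} [NeZero n] (u : Torus n d → ℝ) (η : Config n d) : ℝ :=
  ∏ x : Torus n d, if η x then u x else 1 - u x

/-- `ω_x = (η_x - u_x)/(u_x(1-u_x))`. -/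
noncomputable def om {n d : ℕ} (u : Torus n d → ℝ) (x : Torus n d) (η : Config n d) : ℝ :=
  (occ η x - u x) / (u x * (1 - u x))

/-- The configuration `η^{x,y}` obtained from `η` by exchanging the values at `x` and `y`. -/
def swapC {n d : ℕ} (x y : Torus n d) (η : Config n d) : Config n d :=
  fun z => if z = x then η y else if z = y then η x else η z

/-- `s_{x,y}(η) = η_x(1-η_y)/(u_x(1-u_y))`. -/
noncomputable def sxy {n d : ℕ} (u : Torus n d → ℝ) (x y : Torus n d) (η : Config n d) : ℝ :=
  occ η x * (1 - occ η y) / (u x * (1 - u y))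

lemma swapC_invol {n d : ℕ} (x y : Torus n d) : Function.Involutive (swapC x y) := by
  intro η; funext z
  simp only [swapC]
  by_cases hzx : z = x <;> by_cases hzy : z = y <;>
    simp [hzx, hzy] <;> by_cases hxy : y = x <;> simp_all

lemma swapC_comm {n d : ℕ} (x y : Torus n d) : swapC x y = swapC y x := by
  funext η z
  simp only [swapC]
  by_cases hzx : z = x <;> by_cases hzy : z = y <;> simp_all

lemma swapC_self {n d : ℕ} (x : Torus n d) (η : Config n d) : swapC x x η = η := by
  funext z; simp only [swapC]; split_ifs with hz <;> simp [hz]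

lemma sum_swapC {n d : ℕ} [NeZero n] (x y : Torus n d) (g : Config n d → ℝ) :
    ∑ η : Config n d, g (swapC x y η) = ∑ η : Config n d, g η :=
  Function.Bijective.sum_comp ((swapC_invol x y).bijective) g

lemma bern_pos {n d : ℕ} [NeZero n] (u : Torus n d → ℝ) (hu : ∀ z, 0 < u z ∧ u z < 1)
    (η : Config n d) : 0 < bern u η := by
  apply Finset.prod_pos
  intro z _
  rcases hu z with ⟨h1, h2⟩
  split <;> linarith

lemma young_pt (β p q c : ℝ) (hβ : 0 < β) (hc : 0 ≤ c) :
    p * q * c ≤ β / 2 * (p ^ 2 * c) + 1 / (2 * β) * (q ^ 2 * c) := by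
  have key : p * q ≤ (β ^ 2 * p ^ 2 + q ^ 2) / (2 * β) := by
    rw [le_div_iff₀ (by positivity)]
    nlinarith [sq_nonneg (β * p - q)]
  calc p * q * c ≤ (β ^ 2 * p ^ 2 + q ^ 2) / (2 * β) * c :=
        mul_le_mul_of_nonneg_right key hc
    _ = β / 2 * (p ^ 2 * c) + 1 / (2 * β) * (q ^ 2 * c) := by
        field_simp

lemma sxy_swap_bern {n d : ℕ} [NeZero n] (u : Torus n d → ℝ)
    (hu : ∀ z, 0 < u z ∧ u z < 1) (x y : Torus n d) (η : Config n d) :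
    sxy u x y (swapC x y η) * bern u (swapC x y η) = sxy u y x η * bern u η := by
  by_cases hxy : x = y
  · subst hxy; rw [swapC_self]
  · have hyx : y ≠ x := fun hc => hxy hc.symm
    have hyU : y ∈ Finset.univ.erase x := Finset.mem_erase.mpr ⟨hyx, Finset.mem_univ y⟩
    have hb : ∀ ξ : Config n d, bern u ξ =
        (if ξ x then u x else 1 - u x) * ((if ξ y then u y else 1 - u y)
          * ∏ z ∈ (Finset.univ.erase x).erase y, (if ξ z then u z else 1 - u z)) := by
      intro ξ
      rw [bern, ← Finset.mul_prod_erase _ _ (Finset.mem_univ x),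
        ← Finset.mul_prod_erase _ _ hyU]
    have hrest : (∏ z ∈ (Finset.univ.erase x).erase y,
          (if swapC x y η z then u z else 1 - u z))
        = ∏ z ∈ (Finset.univ.erase x).erase y, (if η z then u z else 1 - u z) := by
      apply Finset.prod_congr rfl
      intro z hz
      rcases Finset.mem_erase.mp hz with ⟨hzy, hz'⟩
      rcases Finset.mem_erase.mp hz' with ⟨hzx, _⟩
      simp [swapC, hzx, hzy]
    rw [hb, hb, hrest]
    have hsx : swapC x y η x = η y := by simp [swapC]
    have hsy : swapC x y η y = η x := by simp [swapC, hyx]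
    rw [hsx, hsy]
    set P := ∏ z ∈ (Finset.univ.erase x).erase y, (if η z then u z else 1 - u z) with hP
    have hfac : sxy u x y (swapC x y η) * ((if η y then u x else 1 - u x)
          * (if η x then u y else 1 - u y))
        = sxy u y x η * ((if η x then u x else 1 - u x) * (if η y then u y else 1 - u y)) := by
      rcases hu x with ⟨hx1, hx2⟩
      rcases hu y with ⟨hy1, hy2⟩
      have hux : u x ≠ 0 := ne_of_gt hx1
      have hux1 : (1 : ℝ) - u x ≠ 0 := by linarith
      have huy : u y ≠ 0 := ne_of_gt hy1
      have huy1 : (1 : ℝ) - u y ≠ 0 := by linarith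
      cases hx : η x <;> cases hy : η y <;>
        simp [sxy, occ, swapC, hx, hy, hyx] <;> field_simp <;> ring
    linear_combination P * hfac

lemma sxy_nonneg {n d : ℕ} (u : Torus n d → ℝ) (hu : ∀ z, 0 < u z ∧ u z < 1)
    (x y : Torus n d) (η : Config n d) : 0 ≤ sxy u x y η := by
  rcases hu x with ⟨hx1, _⟩
  rcases hu y with ⟨_, hy2⟩
  apply div_nonneg
  · unfold occ; split_ifs <;> norm_num
  · have : (0:ℝ) < 1 - u y := by linarith
    positivity

lemma sxy_prod_le {n d : ℕ} (ε₀ : ℝ) (hε₀ : 0 < ε₀) (hε2 : 2 * ε₀ ≤ 1)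
    (u : Torus n d → ℝ) (hu : ∀ z, ε₀ ≤ u z ∧ u z ≤ 1 - ε₀)
    (x y : Torus n d) (η η' : Config n d) :
    sxy u x y η' * sxy u y x η ≤ 4 / ε₀ ^ 2 := by
  rcases hu x with ⟨hx1, hx2⟩
  rcases hu y with ⟨hy1, hy2⟩
  have hux : (0:ℝ) < u x := lt_of_lt_of_le hε₀ hx1
  have huy : (0:ℝ) < u y := lt_of_lt_of_le hε₀ hy1
  have hux1 : (0:ℝ) < 1 - u x := by linarith
  have huy1 : (0:ℝ) < 1 - u y := by linarith
  have hA : ∀ ξ : Config n d, 0 ≤ occ ξ x * (1 - occ ξ y) ∧ occ ξ x * (1 - occ ξ y) ≤ 1 := by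
    intro ξ; unfold occ; constructor <;> split_ifs <;> norm_num
  have hA' : ∀ ξ : Config n d, 0 ≤ occ ξ y * (1 - occ ξ x) ∧ occ ξ y * (1 - occ ξ x) ≤ 1 := by
    intro ξ; unfold occ; constructor <;> split_ifs <;> norm_num
  have heq : sxy u x y η' * sxy u y x η
      = (occ η' x * (1 - occ η' y)) * (occ η y * (1 - occ η x))
        / ((u x * (1 - u y)) * (u y * (1 - u x))) := by
    unfold sxy; field_simp
  rw [heq]
  have hd1 : ε₀ / 2 ≤ u x * (1 - u x) := by
    nlinarith [mul_nonneg (sub_nonneg.mpr hx1) (sub_nonneg.mpr (by linarith : u x ≤ 1 - ε₀))]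
  have hd2 : ε₀ / 2 ≤ u y * (1 - u y) := by
    nlinarith [mul_nonneg (sub_nonneg.mpr hy1) (sub_nonneg.mpr (by linarith : u y ≤ 1 - ε₀))]
  have hden : ε₀ ^ 2 / 4 ≤ (u x * (1 - u y)) * (u y * (1 - u x)) := by
    have := mul_le_mul hd1 hd2 (by positivity) (by positivity)
    nlinarith [this]
  have h4 : (4:ℝ) / ε₀ ^ 2 = 1 / (ε₀ ^ 2 / 4) := by field_simp
  rw [h4]
  apply div_le_div₀ (by norm_num)
  · exact mul_le_one₀ (hA η').2 (hA' η).1 (hA' η).2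
  · positivity
  · exact hden

/-- Lemma G.2: if `ε₀ ≤ u ≤ 1-ε₀` and `∇_{x,y} h ≡ 0` then for any `β > 0`,
`∫ h s_{x,y} ∇_{x,y} f dμ ≤ β D_{x,y}(√f;μ) + (4/(ε₀² β)) ∫ h² f dμ`. -/
theorem ibp_estimate (n d : ℕ) [NeZero n] (ε₀ : ℝ) (hε₀ : 0 < ε₀)
    (u : Torus n d → ℝ) (hu : ∀ x, ε₀ ≤ u x ∧ u x ≤ 1 - ε₀)
    (x y : Torus n d)
    (f : Config n d → ℝ) (hf : ∀ η, 0 ≤ f η) (hf1 : ∑ η : Config n d, f η * bern u η = 1)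
    (h : Config n d → ℝ) (hh : ∀ η, h (swapC x y η) - h η = 0)
    (β : ℝ) (hβ : 0 < β) :
    ∑ η : Config n d, h η * sxy u x y η * (f (swapC x y η) - f η) * bern u η
      ≤ β * (∑ η : Config n d,
              (Real.sqrt (f (swapC x y η)) - Real.sqrt (f η)) ^ 2 * bern u η)
        + (4 / (ε₀ ^ 2 * β)) * ∑ η : Config n d, (h η) ^ 2 * f η * bern u η := by
  -- preliminaries
  have hε2 : 2 * ε₀ ≤ 1 := by
    have h1 := (hu (fun _ => 0)).1
    have h2 := (hu (fun _ => 0)).2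
    linarith
  have hu' : ∀ z, 0 < u z ∧ u z < 1 := fun z =>
    ⟨lt_of_lt_of_le hε₀ (hu z).1, lt_of_le_of_lt (hu z).2 (by linarith)⟩
  have hB : ∀ η, 0 < bern u η := bern_pos u hu'
  have hhσ : ∀ η, h (swapC x y η) = h η := fun η => by linarith [hh η]
  have key1 : ∀ η, sxy u x y (swapC x y η) * bern u (swapC x y η)
      = sxy u y x η * bern u η := sxy_swap_bern u hu' x y
  have key2 : ∀ η, sxy u y x (swapC x y η) * bern u (swapC x y η)
      = sxy u x y η * bern u η := by
    intro η
    have := sxy_swap_bern u hu' y x η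
    rwa [← swapC_comm x y] at this
  have hσσ : ∀ η, swapC x y (swapC x y η) = η := swapC_invol x y
  have hbound : ∀ η η' : Config n d, sxy u x y η' * sxy u y x η ≤ 4 / ε₀ ^ 2 :=
    sxy_prod_le ε₀ hε₀ hε2 u hu x y
  have hbound' : ∀ η η' : Config n d, sxy u y x η' * sxy u x y η ≤ 4 / ε₀ ^ 2 := by
    intro η η'
    have := hbound η' η
    linarith [this]
  -- abbreviations (as plain functions, no set)
  set Sg : ℝ := ∑ η : Config n d, (h η) ^ 2 * f η * bern u η with hSg
  have hSgnn : 0 ≤ Sg := by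
    apply Finset.sum_nonneg
    intro η _
    exact mul_nonneg (mul_nonneg (sq_nonneg _) (hf η)) (hB η).le
  -- Step 1: split the LHS
  have hsplit : ∑ η : Config n d, h η * sxy u x y η * (f (swapC x y η) - f η) * bern u η
      = (∑ η : Config n d, (Real.sqrt (f (swapC x y η)) - Real.sqrt (f η))
            * (h η * sxy u x y η * Real.sqrt (f (swapC x y η))) * bern u η)
        + ∑ η : Config n d, (Real.sqrt (f (swapC x y η)) - Real.sqrt (f η))
            * (h η * sxy u x y η * Real.sqrt (f η)) * bern u η := by
    rw [← Finset.sum_add_distrib]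
    apply Finset.sum_congr rfl
    intro η _
    have h1 : Real.sqrt (f (swapC x y η)) ^ 2 = f (swapC x y η) := Real.sq_sqrt (hf _)
    have h2 : Real.sqrt (f η) ^ 2 = f η := Real.sq_sqrt (hf _)
    linear_combination (h η * sxy u x y η * bern u η) * h2
      - (h η * sxy u x y η * bern u η) * h1
  -- Step 2: transform the second sum via change of variables
  have hS2 : ∑ η : Config n d, (Real.sqrt (f (swapC x y η)) - Real.sqrt (f η))
        * (h η * sxy u x y η * Real.sqrt (f η)) * bern u η
      = ∑ η : Config n d, (Real.sqrt (f η) - Real.sqrt (f (swapC x y η)))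
        * (h η * sxy u y x η * Real.sqrt (f (swapC x y η))) * bern u η := by
    rw [← sum_swapC x y (fun η => (Real.sqrt (f (swapC x y η)) - Real.sqrt (f η))
        * (h η * sxy u x y η * Real.sqrt (f η)) * bern u η)]
    apply Finset.sum_congr rfl
    intro η _
    simp only [hσσ η, hhσ η]
    linear_combination ((Real.sqrt (f η) - Real.sqrt (f (swapC x y η))) * h η
      * Real.sqrt (f (swapC x y η))) * key1 η
  -- Step 3: Young's inequality on both sums
  have hY1 : ∑ η : Config n d, (Real.sqrt (f (swapC x y η)) - Real.sqrt (f η))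
        * (h η * sxy u x y η * Real.sqrt (f (swapC x y η))) * bern u η
      ≤ β / 2 * (∑ η : Config n d,
            (Real.sqrt (f (swapC x y η)) - Real.sqrt (f η)) ^ 2 * bern u η)
        + 1 / (2 * β) * ∑ η : Config n d,
            (h η * sxy u x y η * Real.sqrt (f (swapC x y η))) ^ 2 * bern u η := by
    rw [Finset.mul_sum, Finset.mul_sum, ← Finset.sum_add_distrib]
    apply Finset.sum_le_sum
    intro η _
    exact young_pt β _ _ _ hβ (hB η).le
  have hY2 : ∑ η : Config n d, (Real.sqrt (f η) - Real.sqrt (f (swapC x y η)))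
        * (h η * sxy u y x η * Real.sqrt (f (swapC x y η))) * bern u η
      ≤ β / 2 * (∑ η : Config n d,
            (Real.sqrt (f (swapC x y η)) - Real.sqrt (f η)) ^ 2 * bern u η)
        + 1 / (2 * β) * ∑ η : Config n d,
            (h η * sxy u y x η * Real.sqrt (f (swapC x y η))) ^ 2 * bern u η := by
    rw [Finset.mul_sum, Finset.mul_sum, ← Finset.sum_add_distrib]
    apply Finset.sum_le_sum
    intro η _
    have := young_pt β (Real.sqrt (f η) - Real.sqrt (f (swapC x y η)))
      (h η * sxy u y x η * Real.sqrt (f (swapC x y η))) (bern u η) hβ (hB η).le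
    have hsq : (Real.sqrt (f η) - Real.sqrt (f (swapC x y η))) ^ 2
        = (Real.sqrt (f (swapC x y η)) - Real.sqrt (f η)) ^ 2 := by ring
    rw [hsq] at this
    exact this
  -- Step 4: bound the quadratic error sums
  have hU1 : ∑ η : Config n d,
        (h η * sxy u x y η * Real.sqrt (f (swapC x y η))) ^ 2 * bern u η
      ≤ 4 / ε₀ ^ 2 * Sg := by
    rw [← sum_swapC x y (fun η =>
      (h η * sxy u x y η * Real.sqrt (f (swapC x y η))) ^ 2 * bern u η)]
    rw [hSg, Finset.mul_sum]
    apply Finset.sum_le_sum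
    intro η _
    simp only [hσσ η, hhσ η]
    have hb2 : Real.sqrt (f η) ^ 2 = f η := Real.sq_sqrt (hf η)
    have heq : (h η * sxy u x y (swapC x y η) * Real.sqrt (f η)) ^ 2 * bern u (swapC x y η)
        = h η ^ 2 * f η * (sxy u x y (swapC x y η) * sxy u y x η) * bern u η := by
      linear_combination (h η ^ 2 * sxy u x y (swapC x y η) * sxy u y x η * bern u η) * hb2
        + (h η ^ 2 * Real.sqrt (f η) ^ 2 * sxy u x y (swapC x y η)) * key1 η
    rw [heq]
    have hX : sxy u x y (swapC x y η) * sxy u y x η ≤ 4 / ε₀ ^ 2 := hbound η (swapC x y η)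
    have hc : 0 ≤ h η ^ 2 * f η := mul_nonneg (sq_nonneg _) (hf η)
    nlinarith [mul_nonneg (mul_nonneg hc (sub_nonneg.mpr hX)) (hB η).le]
  have hU2 : ∑ η : Config n d,
        (h η * sxy u y x η * Real.sqrt (f (swapC x y η))) ^ 2 * bern u η
      ≤ 4 / ε₀ ^ 2 * Sg := by
    rw [← sum_swapC x y (fun η =>
      (h η * sxy u y x η * Real.sqrt (f (swapC x y η))) ^ 2 * bern u η)]
    rw [hSg, Finset.mul_sum]
    apply Finset.sum_le_sum
    intro η _
    simp only [hσσ η, hhσ η]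
    have hb2 : Real.sqrt (f η) ^ 2 = f η := Real.sq_sqrt (hf η)
    have heq : (h η * sxy u y x (swapC x y η) * Real.sqrt (f η)) ^ 2 * bern u (swapC x y η)
        = h η ^ 2 * f η * (sxy u y x (swapC x y η) * sxy u x y η) * bern u η := by
      linear_combination (h η ^ 2 * sxy u y x (swapC x y η) * sxy u x y η * bern u η) * hb2
        + (h η ^ 2 * Real.sqrt (f η) ^ 2 * sxy u y x (swapC x y η)) * key2 η
    rw [heq]
    have hX : sxy u y x (swapC x y η) * sxy u x y η ≤ 4 / ε₀ ^ 2 := hbound' η (swapC x y η)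
    have hc : 0 ≤ h η ^ 2 * f η := mul_nonneg (sq_nonneg _) (hf η)
    nlinarith [mul_nonneg (mul_nonneg hc (sub_nonneg.mpr hX)) (hB η).le]
  -- Step 5: combine
  have hβ' : (0:ℝ) ≤ 1 / (2 * β) := by positivity
  have hfin1 : 1 / (2 * β) * (∑ η : Config n d,
        (h η * sxy u x y η * Real.sqrt (f (swapC x y η))) ^ 2 * bern u η)
      ≤ 1 / (2 * β) * (4 / ε₀ ^ 2 * Sg) := mul_le_mul_of_nonneg_left hU1 hβ'
  have hfin2 : 1 / (2 * β) * (∑ η : Config n d,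
        (h η * sxy u y x η * Real.sqrt (f (swapC x y η))) ^ 2 * bern u η)
      ≤ 1 / (2 * β) * (4 / ε₀ ^ 2 * Sg) := mul_le_mul_of_nonneg_left hU2 hβ'
  have hconst : 1 / (2 * β) * (4 / ε₀ ^ 2 * Sg) + 1 / (2 * β) * (4 / ε₀ ^ 2 * Sg)
      = 4 / (ε₀ ^ 2 * β) * Sg := by
    field_simp
    ring
  rw [hsplit, hS2]
  calc _ ≤ (β / 2 * (∑ η : Config n d,
            (Real.sqrt (f (swapC x y η)) - Real.sqrt (f η)) ^ 2 * bern u η)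
        + 1 / (2 * β) * ∑ η : Config n d,
            (h η * sxy u x y η * Real.sqrt (f (swapC x y η))) ^ 2 * bern u η)
      + (β / 2 * (∑ η : Config n d,
            (Real.sqrt (f (swapC x y η)) - Real.sqrt (f η)) ^ 2 * bern u η)
        + 1 / (2 * β) * ∑ η : Config n d,
            (h η * sxy u y x η * Real.sqrt (f (swapC x y η))) ^ 2 * bern u η) :=
        add_le_add hY1 hY2
    _ ≤ β * (∑ η : Config n d,
            (Real.sqrt (f (swapC x y η)) - Real.sqrt (f η)) ^ 2 * bern u η)
        + 4 / (ε₀ ^ 2 * β) * Sg := by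
        rw [← hconst]
        linarith [hfin1, hfin2]
end
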